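/- Let a(n) satisfy a(0)=3, a(1)=1, a(2)=5, a(n)=a(n-1)+2a(n-2)+a(n-3) for n ≥ 3. Then for every i ≥ 2, a(3^i) ≡ 1 (mod 3^i), so all powers 3^i with i ≥ 2 are pseudoprimes for this test. -/

import Mathlib

/-!
The sequence is `a n = trace (M ^ n)` for the companion matrix `M` of `X ^ 3 - X ^ 2 - 2 X - 1`,
a matrix of determinant `1`. For a `3 × 3` matrix `A` of determinant `1`,
`trace (A ^ 3) = t ^ 3 - 3 t t' + 3` with `t = trace A` and `t' = trace A⁻¹`, so if `t` and `t'`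
are both `≡ 1 (mod 3 ^ (j + 1))`, the traces of `A ^ 3` and `A⁻¹ ^ 3` are `≡ 1 (mod 3 ^ (j + 2))`.
Since `trace M = 1` and `trace M⁻¹ = -2` are `≡ 1 (mod 3)`, this gives
`a (3 ^ j) ≡ 1 (mod 3 ^ (j + 1))`.
-/

open Matrix

namespace Matrix

theorem trace_pow_three_fin_three {R : Type*} [CommRing R] (A : Matrix (Fin 3) (Fin 3) R) :
    (A ^ 3).trace = A.trace ^ 3 - 3 * A.trace * A.adjugate.trace + 3 * A.det := by
  rw [eta_fin_three A, pow_three]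
  simp [trace_fin_three, adjugate_fin_three, det_fin_three]
  ring

theorem trace_pow_three_of_det_eq_one {R : Type*} [CommRing R] {A : Matrix (Fin 3) (Fin 3) R}
    (hA : A.det = 1) : (A ^ 3).trace = A.trace ^ 3 - 3 * A.trace * A⁻¹.trace + 3 := by
  rw [trace_pow_three_fin_three, inv_def, hA, Ring.inverse_one, one_smul, mul_one]

end Matrix

theorem Int.dvd_cube_sub_three_mul_add_two {m u v : ℤ} (hu : 3 * m ∣ u - 1) (hv : 3 * m ∣ v - 1) :
    9 * m ∣ u ^ 3 - 3 * u * v + 2 := by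
  obtain ⟨s, hs⟩ := hu
  obtain ⟨t, ht⟩ := hv
  obtain rfl : u = 1 + 3 * m * s := by linarith
  obtain rfl : v = 1 + 3 * m * t := by linarith
  exact ⟨-t + 3 * m * s ^ 2 - 3 * m * s * t + 3 * m ^ 2 * s ^ 3, by ring⟩

section Unimodular

variable {A : Matrix (Fin 3) (Fin 3) ℤ}

theorem dvd_trace_pow_three_sub_one (hA : A.det = 1) {m : ℤ}
    (h : 3 * m ∣ A.trace - 1) (h' : 3 * m ∣ A⁻¹.trace - 1) : 9 * m ∣ (A ^ 3).trace - 1 := by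
  convert Int.dvd_cube_sub_three_mul_add_two h h' using 1
  rw [trace_pow_three_of_det_eq_one hA]
  ring

theorem dvd_trace_pow_three_pow_sub_one (hA : A.det = 1)
    (h : 3 ∣ A.trace - 1) (h' : 3 ∣ A⁻¹.trace - 1) (j : ℕ) :
    3 ^ (j + 1) ∣ (A ^ 3 ^ j).trace - 1 ∧ 3 ^ (j + 1) ∣ (A ^ 3 ^ j)⁻¹.trace - 1 := by
  induction j with
  | zero => simpa using ⟨h, h'⟩
  | succ j ih =>
    set B := A ^ 3 ^ j
    have hB : B.det = 1 := by rw [det_pow, hA, one_pow]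
    have hB' : B⁻¹.det = 1 := by rw [det_nonsing_inv, hB, Ring.inverse_one]
    have hBB : B⁻¹⁻¹ = B := nonsing_inv_nonsing_inv B (by rw [hB]; exact isUnit_one)
    have hpow : A ^ 3 ^ (j + 1) = B ^ 3 := by rw [pow_succ, pow_mul]
    have h9 : (3 : ℤ) ^ (j + 1 + 1) = 9 * 3 ^ j := by ring
    rw [hpow, ← inv_pow', h9]
    rw [pow_succ, mul_comm] at ih
    refine ⟨dvd_trace_pow_three_sub_one hB ih.1 ih.2, ?_⟩
    exact dvd_trace_pow_three_sub_one hB' ih.2 (by rw [hBB]; exact ih.1)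

end Unimodular

def companion : Matrix (Fin 3) (Fin 3) ℤ := !![1, 2, 1; 1, 0, 0; 0, 1, 0]

theorem companion_inv : companion⁻¹ = !![0, 1, 0; 0, 0, 1; 1, -1, -2] := by
  refine inv_eq_left_inv ?_
  ext i j
  fin_cases i <;> fin_cases j <;> simp [companion, mul_apply, Fin.sum_univ_three, one_apply]

theorem det_companion : companion.det = 1 := by
  simp [companion, det_fin_three]

theorem companion_pow_three : companion ^ 3 = companion ^ 2 + 2 * companion + 1 := by
  ext i j
  fin_cases i <;> fin_cases j <;>
    simp [companion, pow_three, pow_two, mul_apply, Fin.sum_univ_three, one_apply] <;> rfl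

theorem trace_companion_pow_add_three (n : ℕ) :
    (companion ^ (n + 3)).trace =
      (companion ^ (n + 2)).trace + 2 * (companion ^ (n + 1)).trace + (companion ^ n).trace := by
  have : companion ^ (n + 3) = companion ^ (n + 2) + 2 * companion ^ (n + 1) + companion ^ n := by
    rw [pow_add, companion_pow_three, two_mul, two_mul]
    simp only [mul_add, mul_one, ← pow_add, ← pow_succ]
  rw [this, two_mul]
  simp only [trace_add]
  ring

theorem eq_trace_companion_pow (a : ℕ → ℤ) (h0 : a 0 = 3) (h1 : a 1 = 1) (h2 : a 2 = 5)
    (hrec : ∀ n, 3 ≤ n → a n = a (n - 1) + 2 * a (n - 2) + a (n - 3)) (n : ℕ) :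
    a n = (companion ^ n).trace := by
  induction n using Nat.strong_induction_on with
  | _ n ih =>
    match n with
    | 0 => simp [h0]
    | 1 => simp [h1, companion, trace_fin_three]
    | 2 => simp [h2, companion, pow_two, trace_fin_three]
    | n + 3 =>
      rw [hrec (n + 3) (by omega), trace_companion_pow_add_three]
      simp only [Nat.add_sub_cancel, show n + 3 - 1 = n + 2 from rfl, show n + 3 - 2 = n + 1 from rfl]
      rw [ih (n + 2) (by omega), ih (n + 1) (by omega), ih n (by omega)]

theorem thm5_pseudoprimes (a : ℕ → ℤ)
    (h0 : a 0 = 3) (h1 : a 1 = 1) (h2 : a 2 = 5)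
    (hrec : ∀ n, 3 ≤ n → a n = a (n - 1) + 2 * a (n - 2) + a (n - 3)) :
    ∀ i : ℕ, 2 ≤ i → a (3 ^ i) ≡ 1 [ZMOD ((3 ^ i : ℕ) : ℤ)] := by
  intro i _
  have hbase : (3 : ℤ) ∣ companion.trace - 1 ∧ (3 : ℤ) ∣ companion⁻¹.trace - 1 := by
    rw [companion_inv]
    simp [companion, trace_fin_three]
  have hdvd := (dvd_trace_pow_three_pow_sub_one det_companion hbase.1 hbase.2 i).1
  rw [← eq_trace_companion_pow a h0 h1 h2 hrec] at hdvd
  push_cast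
  exact (Int.modEq_iff_dvd.2 ((pow_dvd_pow 3 i.le_succ).trans hdvd)).symm
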